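/- For every B ≠ 0, d > 0 and every real z ∉ Σ_B, the terms t_n := ln((πn)²/(2|B|d²)) − ψ((|B| − z + (πn/d)²)/(2|B|)) satisfy t_n = z·(d/(πn))² + O(n^{−4}) as n → ∞; in particular, for every b ∈ (0,d) the sequence n ↦ t_n·sin²(πnb/d) is summable, so the series defining ξ_B(b,z) converges. -/

import Mathlib

open Real Filter Topology Asymptotics

/-- The digamma function `ψ = Γ'/Γ`. -/
noncomputable def digamma (x : ℝ) : ℝ := deriv Real.Gamma x / Real.Gamma x

/-- The set of Landau–transverse levels
`Σ_B = {|B|(2m+1) + (πn/d)² : m ∈ ℤ_{≥0}, n ∈ ℤ_{≥1}}` of the free magnetic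
Hamiltonian in a Dirichlet layer of width `d`. -/
def landauLevels (B d : ℝ) : Set ℝ :=
  {x | ∃ m n : ℕ, x = |B| * (2 * (m : ℝ) + 1) + (π * ((n : ℝ) + 1) / d) ^ 2}

/-- The `n`-th term (for `n+1`-st transverse mode) of the series defining the
magnetic regularized Green's function:
`t_n = ln((πn)²/(2|B|d²)) − ψ((|B| − z + (πn/d)²)/(2|B|))`. -/
noncomputable def magTerm (B d z : ℝ) (n : ℕ) : ℝ :=
  Real.log ((π * ((n : ℝ) + 1)) ^ 2 / (2 * |B| * d ^ 2)) -
    digamma ((|B| - z + (π * ((n : ℝ) + 1) / d) ^ 2) / (2 * |B|))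

/-- The magnetic regularized Green's function `ξ_B(b,z)` of a point interaction at
height `b ∈ (0,d)` in the Dirichlet layer of width `d` with homogeneous magnetic
field of strength `B`. -/
noncomputable def xiB (B d b z : ℝ) : ℝ :=
  (1 / (2 * π * d)) * ∑' n : ℕ, magTerm B d z n * Real.sin (π * ((n : ℝ) + 1) * b / d) ^ 2
    + (1 / (4 * π * d)) *
      (Real.eulerMascheroniConstant + digamma (b / d) + (π / 2) * Real.cot (π * b / d))


section MagAux
open Set
set_option maxHeartbeats 1000000

noncomputable def phi (u : ℝ) : ℝ := ((u+1) - (u+1)⁻¹)/2 - Real.log (u+1)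

lemma phi_hasDeriv {u : ℝ} (hu : -1 < u) :
    HasDerivAt phi (u^2/(2*(u+1)^2)) u := by
  have hu1 : u + 1 ≠ 0 := by linarith
  have h1 : HasDerivAt (fun v : ℝ => v + 1) 1 u := (hasDerivAt_id u).add_const 1
  have h2 := h1.inv hu1
  have h3 := h1.log hu1
  have := ((h1.sub h2).div_const 2).sub h3
  refine this.congr_deriv ?_
  field_simp
  ring

lemma phi_nonneg {u : ℝ} (hu : 0 ≤ u) : 0 ≤ phi u := by
  have h0 : phi 0 = 0 := by simp [phi]
  have hmono : MonotoneOn phi (Ici (0:ℝ)) := by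
    apply monotoneOn_of_deriv_nonneg (convex_Ici 0)
    · exact fun x hx => ((phi_hasDeriv (by simp at hx; linarith)).continuousAt).continuousWithinAt
    · intro x hx
      rw [interior_Ici] at hx
      exact (phi_hasDeriv (by simp at hx; linarith)).differentiableAt.differentiableWithinAt
    · intro x hx
      rw [interior_Ici] at hx
      rw [(phi_hasDeriv (by simp at hx; linarith)).deriv]
      positivity
  calc (0:ℝ) = phi 0 := h0.symm
  _ ≤ phi u := hmono (le_refl (0:ℝ)) hu hu

lemma phi_le {u : ℝ} (hu : 0 ≤ u) : phi u ≤ u^3/6 := by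
  have hmono : MonotoneOn (fun u => u^3/6 - phi u) (Ici (0:ℝ)) := by
    apply monotoneOn_of_deriv_nonneg (convex_Ici 0)
    · intro x hx
      simp only [mem_Ici] at hx
      exact (((hasDerivAt_pow 3 x).div_const 6).sub (phi_hasDeriv (by linarith))).continuousAt.continuousWithinAt
    · intro x hx
      rw [interior_Ici] at hx
      simp only [mem_Ioi] at hx
      exact (((hasDerivAt_pow 3 x).div_const 6).sub (phi_hasDeriv (by linarith))).differentiableAt.differentiableWithinAt
    · intro x hx
      rw [interior_Ici] at hx
      simp only [mem_Ioi] at hx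
      rw [show (fun u : ℝ => u^3/6 - phi u) = (fun x : ℝ => x^3/6) - phi from rfl,
        (((hasDerivAt_pow 3 x).div_const 6).sub (phi_hasDeriv (by linarith))).deriv]
      have h1 : x^2/(2*(x+1)^2) ≤ x^2/2 := by
        apply div_le_div_of_nonneg_left (by positivity) (by norm_num)
        nlinarith
      push_cast
      norm_num
      linarith [h1]
  have := hmono (le_refl (0:ℝ)) hu hu
  simp only [phi, Real.log_one] at this ⊢
  norm_num at this
  linarith [this]

lemma dgamma_diff {x : ℝ} (hx : 0 < x) : DifferentiableAt ℝ Real.Gamma x :=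
  Real.differentiableAt_Gamma fun m ↦
    ne_of_gt (lt_of_le_of_lt (neg_nonpos.2 m.cast_nonneg) hx)

lemma lg_diff {x : ℝ} (hx : 0 < x) :
    DifferentiableAt ℝ (fun y => Real.log (Real.Gamma y)) x :=
  (dgamma_diff hx).log (Real.Gamma_pos_of_pos hx).ne'

lemma digamma_eq_deriv_log {x : ℝ} (hx : 0 < x) :
    digamma x = deriv (fun y => Real.log (Real.Gamma y)) x := by
  rw [deriv.log (dgamma_diff hx) (Real.Gamma_pos_of_pos hx).ne', digamma]

lemma digamma_mono {x y : ℝ} (hx : 0 < x) (hxy : x ≤ y) : digamma x ≤ digamma y := by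
  rcases eq_or_lt_of_le hxy with rfl | h
  · exact le_rfl
  · rw [digamma_eq_deriv_log hx, digamma_eq_deriv_log (hx.trans h)]
    exact (Real.convexOn_log_Gamma.deriv_le_slope (mem_Ioi.2 hx) (mem_Ioi.2 (hx.trans h)) h
        (lg_diff hx)).trans
      (Real.convexOn_log_Gamma.slope_le_deriv (mem_Ioi.2 hx) (mem_Ioi.2 (hx.trans h)) h
        (lg_diff (hx.trans h)))

lemma digamma_add_one {x : ℝ} (hx : 0 < x) : digamma (x + 1) = digamma x + 1/x := by
  rw [digamma_eq_deriv_log (by linarith), digamma_eq_deriv_log hx]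
  rw [← deriv_comp_add_const, one_div, ← Real.deriv_log x,
    ← deriv_add (lg_diff hx) (Real.differentiableAt_log hx.ne')]
  apply Filter.EventuallyEq.deriv_eq
  filter_upwards [eventually_gt_nhds hx] with y hy
  rw [Real.Gamma_add_one hy.ne', Real.log_mul hy.ne' (Real.Gamma_pos_of_pos hy).ne', add_comm]
  rfl

lemma digamma_nat (n : ℕ) :
    digamma ((n : ℝ) + 1) = -Real.eulerMascheroniConstant + harmonic n := by
  rw [digamma, Real.deriv_Gamma_nat n, Real.Gamma_nat_eq_factorial, mul_comm,
    mul_div_assoc, div_self (by positivity : ((n.factorial : ℝ)) ≠ 0), mul_one]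

noncomputable def Dseq (x : ℝ) (n : ℕ) : ℝ :=
  digamma (x + n) - Real.log (x + n) + 1/(2*(x+n))

lemma trap_eq {a : ℝ} (ha : 0 < a) :
    1/a = (Real.log (a+1) - Real.log a) + phi (1/a) + 1/(2*a) - 1/(2*(a+1)) := by
  have h1 : Real.log (1/a + 1) = Real.log (a+1) - Real.log a := by
    rw [show 1/a + 1 = (a+1)/a by field_simp; ring, Real.log_div (by linarith) ha.ne']
  simp only [phi, h1]
  have h2 : (1/a + 1)⁻¹ = a/(a+1) := by
    rw [show 1/a + 1 = (a+1)/a by field_simp; ring]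
    rw [inv_div]
  rw [h2]
  field_simp
  ring

lemma Dseq_identity {x : ℝ} (hx : 0 < x) (n : ℕ) :
    Dseq x n = Dseq x 0 + ∑ k ∈ Finset.range n, phi (1/(x+k)) := by
  induction n with
  | zero => simp
  | succ n ih =>
    have hxn : (0:ℝ) < x + n := by positivity
    have key := trap_eq hxn
    have hrec := digamma_add_one hxn
    rw [Finset.sum_range_succ, ← add_assoc, ← ih]
    simp only [Dseq]
    push_cast
    have e1 : x + ((n:ℝ)+1) = (x + n) + 1 := by ring
    rw [e1, hrec]
    linarith [key]

lemma tendsto_Dseq {x : ℝ} (hx : 0 < x) : Tendsto (Dseq x) atTop (𝓝 0) := by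
  -- squeeze using harmonic numbers
  obtain ⟨p, hp⟩ : ∃ p : ℕ, (⌈x⌉₊ : ℕ) = p + 1 :=
    ⟨⌈x⌉₊ - 1, (Nat.succ_pred_eq_of_pos (Nat.ceil_pos.2 hx)).symm⟩
  have hxp : x ≤ p + 1 := by
    have := Nat.le_ceil x
    rw [hp] at this; push_cast at this; linarith
  have hpx : (p : ℝ) + 1 ≤ x + 1 := by
    have := Nat.ceil_lt_add_one hx.le
    rw [hp] at this; push_cast at this; linarith
  -- digamma (x + (n+1)) is between -γ + harmonic (p+n) and -γ + harmonic (p+n+1)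
  have hlow : ∀ n : ℕ, -Real.eulerMascheroniConstant + harmonic (p+n) ≤ digamma (x + (n+1)) := by
    intro n
    rw [← digamma_nat (p+n)]
    apply digamma_mono (by positivity)
    push_cast; linarith
  have hhigh : ∀ n : ℕ, digamma (x + (n+1)) ≤ -Real.eulerMascheroniConstant + harmonic (p+n+1) := by
    intro n
    rw [← digamma_nat (p+n+1)]
    apply digamma_mono (by positivity)
    push_cast; linarith
  have hratio : ∀ α β : ℝ, Tendsto (fun n : ℕ => Real.log ((n:ℝ)+α) - Real.log ((n:ℝ)+β))
      atTop (𝓝 0) := by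
    intro α β
    have h0 : Tendsto (fun n : ℕ => (α-β)/((n:ℝ)+β)) atTop (𝓝 0) := by
      have hb : Tendsto (fun n : ℕ => ((n:ℝ)+β)) atTop atTop :=
        tendsto_atTop_add_const_right atTop β tendsto_natCast_atTop_atTop
      have := (tendsto_inv_atTop_zero.comp hb).const_mul (α-β)
      simpa [Function.comp, div_eq_mul_inv] using this
    have h1 : Tendsto (fun n : ℕ => ((n:ℝ)+α)/((n:ℝ)+β)) atTop (𝓝 1) := by
      have he : ∀ᶠ n : ℕ in atTop, 1 + (α-β)/((n:ℝ)+β) = ((n:ℝ)+α)/((n:ℝ)+β) := by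
        filter_upwards [eventually_gt_atTop ⌈|β|⌉₊] with n hn
        have hb : (0:ℝ) < (n:ℝ)+β := by
          have : |β| ≤ ⌈|β|⌉₊ := Nat.le_ceil _
          have : (⌈|β|⌉₊:ℝ) < n := by exact_mod_cast hn
          have := abs_le.1 (Nat.le_ceil |β|)
          nlinarith [abs_nonneg β, le_abs_self β, neg_abs_le β, Nat.le_ceil |β|]
        field_simp
        ring
      refine Tendsto.congr' he ?_
      have := h0.const_add 1
      simpa using this
    have h2 : Tendsto (fun n : ℕ => Real.log (((n:ℝ)+α)/((n:ℝ)+β))) atTop (𝓝 0) := by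
      have := (Real.continuousAt_log one_ne_zero).tendsto.comp h1
      simpa [Function.comp_def] using this
    refine h2.congr' ?_
    filter_upwards [eventually_gt_atTop (⌈|α|⌉₊ + ⌈|β|⌉₊)] with n hn
    have hα : (0:ℝ) < (n:ℝ)+α := by
      have h1 : |α| ≤ (⌈|α|⌉₊:ℝ) := Nat.le_ceil _
      have h2 : ((⌈|α|⌉₊ + ⌈|β|⌉₊ : ℕ):ℝ) < n := by exact_mod_cast hn
      push_cast at h2
      nlinarith [neg_abs_le α, Nat.cast_nonneg (α := ℝ) ⌈|β|⌉₊]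
    have hβ : (0:ℝ) < (n:ℝ)+β := by
      have h1 : |β| ≤ (⌈|β|⌉₊:ℝ) := Nat.le_ceil _
      have h2 : ((⌈|α|⌉₊ + ⌈|β|⌉₊ : ℕ):ℝ) < n := by exact_mod_cast hn
      push_cast at h2
      nlinarith [neg_abs_le β, Nat.cast_nonneg (α := ℝ) ⌈|α|⌉₊]
    rw [Real.log_div hα.ne' hβ.ne']
  have hH : ∀ q : ℕ, Tendsto (fun n : ℕ => (harmonic (n+q) : ℝ) - Real.log (n+q) -
      Real.eulerMascheroniConstant) atTop (𝓝 0) := by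
    intro q
    have hcomp := Real.tendsto_harmonic_sub_log.comp (tendsto_add_atTop_nat q)
    have := hcomp.sub_const Real.eulerMascheroniConstant
    simp only [sub_self] at this
    refine this.congr fun n => ?_
    simp [Function.comp]
  have hb : Tendsto (fun n : ℕ => ((n:ℝ)+(x+1))) atTop atTop :=
    tendsto_atTop_add_const_right atTop (x+1) tendsto_natCast_atTop_atTop
  have hinv : Tendsto (fun n : ℕ => 1/(2*((n:ℝ)+(x+1)))) atTop (𝓝 0) := by
    have := (tendsto_inv_atTop_zero.comp hb).const_mul (1/2 : ℝ)
    have h2 : Tendsto (fun n : ℕ => (1/2 : ℝ) * ((n:ℝ)+(x+1))⁻¹) atTop (𝓝 0) := by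
      simpa [Function.comp] using this
    refine h2.congr fun n => ?_
    rw [div_mul_eq_div_div_swap]
    rw [mul_comm, div_div]
    rw [one_div, one_div, ← mul_inv]
  have hA : Tendsto (fun n : ℕ => -Real.eulerMascheroniConstant + (harmonic (n+p) : ℝ)
      - Real.log ((n:ℝ)+(x+1))) atTop (𝓝 0) := by
    have := (hH p).add (hratio p (x+1))
    simp only [add_zero] at this
    refine this.congr fun n => ?_
    push_cast
    ring
  have hB : Tendsto (fun n : ℕ => -Real.eulerMascheroniConstant + (harmonic (n+(p+1)) : ℝ)
      - Real.log ((n:ℝ)+(x+1)) + 1/(2*((n:ℝ)+(x+1)))) atTop (𝓝 0) := by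
    have := ((hH (p+1)).add (hratio (p+1) (x+1))).add hinv
    simp only [add_zero] at this
    refine this.congr fun n => ?_
    push_cast
    ring
  have hsq : Tendsto (fun n : ℕ => Dseq x (n+1)) atTop (𝓝 0) := by
    refine tendsto_of_tendsto_of_tendsto_of_le_of_le hA hB (fun n => ?_) (fun n => ?_)
    · have h1 := hlow n
      have h2 : (0:ℝ) < 2*(x+(n+1)) := by positivity
      have harg : x + ((n:ℕ):ℝ) + 1 = (n:ℝ) + (x+1) := by ring
      simp only [Dseq]
      push_cast
      rw [show x + ((n:ℝ)+1) = (n:ℝ)+(x+1) by ring]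
      have h3 : digamma ((n:ℝ)+(x+1)) = digamma (x + ((n:ℝ)+1)) := by ring_nf
      rw [h3]
      have h4 : (0:ℝ) ≤ 1/(2*((n:ℝ)+(x+1))) := by positivity
      have h5 : (harmonic (n+p) : ℝ) = (harmonic (p+n) : ℝ) := by rw [Nat.add_comm]
      rw [h5]
      linarith
    · have h1 := hhigh n
      simp only [Dseq]
      push_cast
      rw [show x + ((n:ℝ)+1) = (n:ℝ)+(x+1) by ring]
      have h3 : digamma ((n:ℝ)+(x+1)) = digamma (x + ((n:ℝ)+1)) := by ring_nf
      rw [h3]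
      have h5 : (harmonic (n+(p+1)) : ℝ) = (harmonic (p+n+1) : ℝ) := by
        rw [show n+(p+1) = p+n+1 by omega]
      rw [h5]
      linarith
  exact (tendsto_add_atTop_iff_nat 1).1 hsq

lemma sum_cube_bound {x : ℝ} (hx : 1 ≤ x) (n : ℕ) :
    ∑ k ∈ Finset.range n, 1/(6*(x+k)^3) ≤ 1/(6*x^3) + 1/(12*x^2) := by
  have hx0 : (0:ℝ) < x := by linarith
  have key : ∀ m : ℕ, ∑ k ∈ Finset.range (m+1), 1/(6*(x+k)^3)
      ≤ 1/(6*x^3) + 1/(12*x^2) - 1/(12*(x+m)^2) := by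
    intro m
    induction m with
    | zero => simp
    | succ m ih =>
      rw [Finset.sum_range_succ]
      have hb : (0:ℝ) < x + m := by positivity
      have step : 1/(6*(x+(m+1))^2*(x+(m+1))) ≤ 1/(12*(x+m)^2) - 1/(12*(x+(m+1))^2) := by
        have heq : 1/(12*(x+m)^2) - 1/(12*(x+(m+1))^2)
            = (2*(x+m)+1)/(12*(x+m)^2*(x+(m+1))^2) := by
          field_simp
          ring
        rw [heq, div_le_div_iff₀ (by positivity) (by positivity)]
        nlinarith [sq_nonneg (x+m), hb.le]
      have harg : (1:ℝ)/(6*(x+((m:ℝ)+1))^3) = 1/(6*(x+(m+1))^2*(x+(m+1))) := by ring_nf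
      push_cast
      push_cast at ih
      rw [harg]
      linarith
  cases n with
  | zero => simp; positivity
  | succ m =>
    refine (key m).trans ?_
    have : (0:ℝ) < 12*(x+m)^2 := by positivity
    have : (0:ℝ) ≤ 1/(12*(x+m)^2) := by positivity
    linarith

lemma digamma_bounds {x : ℝ} (hx : 1 ≤ x) :
    Real.log x - 1/(2*x) - 1/(4*x^2) ≤ digamma x ∧ digamma x ≤ Real.log x - 1/(2*x) := by
  have hx0 : (0:ℝ) < x := by linarith
  have hP : Tendsto (fun n => ∑ k ∈ Finset.range n, phi (1/(x+k))) atTop (𝓝 (-Dseq x 0)) := by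
    have := (tendsto_Dseq hx0).sub_const (Dseq x 0)
    simp only [zero_sub] at this
    refine this.congr fun n => ?_
    rw [Dseq_identity hx0 n]
    ring
  have hlb : (0:ℝ) ≤ -Dseq x 0 := by
    refine ge_of_tendsto' hP fun n => ?_
    exact Finset.sum_nonneg fun k _ => phi_nonneg (by positivity)
  have hub : -Dseq x 0 ≤ 1/(4*x^2) := by
    refine le_of_tendsto' hP fun n => ?_
    calc ∑ k ∈ Finset.range n, phi (1/(x+k))
        ≤ ∑ k ∈ Finset.range n, 1/(6*(x+k)^3) := by
          refine Finset.sum_le_sum fun k _ => ?_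
          have hk : (0:ℝ) < x + k := by positivity
          refine (phi_le (by positivity)).trans (le_of_eq ?_)
          field_simp
      _ ≤ 1/(6*x^3) + 1/(12*x^2) := sum_cube_bound hx n
      _ ≤ 1/(4*x^2) := by
          have h1 : 1/(6*x^3) ≤ 1/(6*x^2) := by
            apply div_le_div_of_nonneg_left (by norm_num) (by positivity)
            nlinarith
          have h2 : 1/(6*x^2) + 1/(12*x^2) = 1/(4*x^2) := by field_simp; ring
          linarith
  have hD0 : Dseq x 0 = digamma x - Real.log x + 1/(2*x) := by
    simp [Dseq]
  constructor <;> [linarith [hub, hD0 ▸ hub]; linarith [hlb, hD0 ▸ hlb]]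

lemma log_one_add_bound {u : ℝ} (hu : |u| ≤ 1/2) : |Real.log (1+u) - u| ≤ 2*u^2 := by
  have h1 : |(-u)| < 1 := by rw [abs_neg]; linarith [abs_nonneg u]
  have := Real.abs_log_sub_add_sum_range_le h1 1
  simp only [Finset.sum_range_one, pow_one, Nat.cast_zero, zero_add, div_one, abs_neg] at this
  have h2 : 1 - -u = 1 + u := by ring
  rw [h2] at this
  have h3 : |Real.log (1+u) - u| = |(-u) + Real.log (1+u)| := by
    rw [show (-u) + Real.log (1+u) = Real.log (1+u) - u by ring]
  rw [h3]
  have h4 : |u|^(1+1)/(1-|u|) ≤ 2*u^2 := by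
    have h5 : (1:ℝ)/2 ≤ 1 - |u| := by linarith
    have h6 : |u|^2 = u^2 := sq_abs u
    calc |u|^(1+1)/(1-|u|) ≤ |u|^2/(1/2) := by
          apply div_le_div_of_nonneg_left (by positivity) (by norm_num) h5
      _ = 2*u^2 := by rw [h6]; ring
  exact this.trans h4

theorem magTerm_asymp (B d z : ℝ) (hB : B ≠ 0) (hd : 0 < d) :
    (fun n : ℕ => magTerm B d z n - z * (d / (π * ((n : ℝ) + 1))) ^ 2)
        =O[atTop] (fun n : ℕ => ((n : ℝ) + 1) ^ (-4 : ℤ)) := by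
  have hB0 : (0:ℝ) < |B| := abs_pos.2 hB
  set c : ℝ := (|B| - z) / (2 * |B|) with hc
  set K : ℝ := π^2 / (2 * |B| * d^2) with hK
  have hKpos : 0 < K := by positivity
  rw [isBigO_iff]
  refine ⟨(2*c^2 + |c| + 1)/K^2, ?_⟩
  filter_upwards [eventually_ge_atTop ⌈(2*|c|+2)/K⌉₊] with n hn
  set N : ℝ := (n:ℝ) + 1 with hN
  have hN1 : 1 ≤ N := by rw [hN]; linarith [Nat.cast_nonneg (α := ℝ) n]
  have hNpos : 0 < N := by linarith
  set a : ℝ := K * N^2 with ha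
  have hapos : 0 < a := by positivity
  -- a is large
  have halarge : 2*|c| + 2 ≤ a := by
    have h1 : ((⌈(2*|c|+2)/K⌉₊ : ℝ)) ≤ (n:ℝ) := by exact_mod_cast hn
    have h2 : (2*|c|+2)/K ≤ (n:ℝ) := (Nat.le_ceil _).trans h1
    have h3 : 2*|c|+2 ≤ K * (n:ℝ) := by
      rw [div_le_iff₀ hKpos] at h2; linarith [h2]
    have h4 : (n:ℝ) ≤ N^2 := by nlinarith [Nat.cast_nonneg (α := ℝ) n]
    nlinarith
  have hca : |c| ≤ a/2 - 1 := by linarith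
  have hac1 : 1 ≤ a + c := by
    have := neg_abs_le c; linarith
  have hac2 : a/2 ≤ a + c := by
    have := neg_abs_le c; linarith
  have hacpos : 0 < a + c := by linarith
  -- identify the magTerm pieces
  have harg : (|B| - z + (π * N / d) ^ 2) / (2 * |B|) = a + c := by
    rw [ha, hK, hc]; field_simp; ring
  have hloga : (π * N) ^ 2 / (2 * |B| * d ^ 2) = a := by
    rw [ha, hK]; field_simp
  have hzw : z * (d / (π * N)) ^ 2 = 1/(2*a) - c/a := by
    rw [ha, hK, hc]
    field_simp
    ring
  have hmag : magTerm B d z n = Real.log a - digamma (a + c) := by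
    rw [magTerm, ← hN, harg, hloga]
  -- digamma bound
  obtain ⟨hd1, hd2⟩ := digamma_bounds hac1
  -- log bound : |log(a+c) - log a - c/a| ≤ 2*(c/a)^2
  have hu : |c/a| ≤ 1/2 := by
    rw [abs_div, abs_of_pos hapos, div_le_iff₀ hapos]
    linarith
  have hlog : |Real.log (a+c) - Real.log a - c/a| ≤ 2*(c/a)^2 := by
    have h1 : Real.log (a+c) - Real.log a = Real.log (1 + c/a) := by
      rw [← Real.log_div hacpos.ne' hapos.ne']
      congr 1
      field_simp
    rw [h1]
    exact log_one_add_bound hu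
  -- 1/(2(a+c)) - 1/(2a) bound
  have hhalf : |1/(2*(a+c)) - 1/(2*a)| ≤ |c|/a^2 := by
    have he : 1/(2*(a+c)) - 1/(2*a) = -c/(2*a*(a+c)) := by
      field_simp; ring
    rw [he, abs_div, abs_neg, abs_of_pos (show (0:ℝ) < 2*a*(a+c) by positivity)]
    rw [div_le_div_iff₀ (by positivity) (by positivity)]
    have h2 : a^2 ≤ 2*a*(a+c) := by nlinarith [hapos, hac2]
    exact mul_le_mul_of_nonneg_left h2 (abs_nonneg c)
  -- E bound
  have hE : |digamma (a+c) - (Real.log (a+c) - 1/(2*(a+c)))| ≤ 1/a^2 := by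
    rw [abs_le]
    constructor
    · have h1 : 1/(4*(a+c)^2) ≤ 1/a^2 := by
        rw [div_le_div_iff₀ (by positivity) (by positivity)]
        nlinarith
      nlinarith [hd1]
    · have h2 : (0:ℝ) ≤ 1/a^2 := by positivity
      linarith [hd2]
  -- combine
  have key : magTerm B d z n - z * (d / (π * N)) ^ 2
      = -(Real.log (a+c) - Real.log a - c/a)
        + (1/(2*(a+c)) - 1/(2*a))
        - (digamma (a+c) - (Real.log (a+c) - 1/(2*(a+c)))) := by
    rw [hmag, hzw]
    ring
  rw [key]
  have hbound : |-(Real.log (a+c) - Real.log a - c/a)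
        + (1/(2*(a+c)) - 1/(2*a))
        - (digamma (a+c) - (Real.log (a+c) - 1/(2*(a+c))))|
      ≤ 2*(c/a)^2 + |c|/a^2 + 1/a^2 := by
    calc _ ≤ |-(Real.log (a+c) - Real.log a - c/a)| + |1/(2*(a+c)) - 1/(2*a)|
            + |digamma (a+c) - (Real.log (a+c) - 1/(2*(a+c)))| := by
          apply (abs_sub _ _).trans
          gcongr
          exact abs_add_le _ _
      _ ≤ 2*(c/a)^2 + |c|/a^2 + 1/a^2 := by
          rw [abs_neg]
          gcongr
  have hNnorm : ‖N ^ (-4:ℤ)‖ = 1/N^4 := by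
    rw [Real.norm_eq_abs, abs_of_pos (by positivity), zpow_neg, ← zpow_natCast (a := N) (n := 4)]
    norm_num
  rw [Real.norm_eq_abs, hNnorm]
  refine hbound.trans (le_of_eq ?_)
  have ha4 : a^2 = K^2 * N^4 := by rw [ha]; ring
  have hfin : 2*(c/a)^2 + |c|/a^2 + 1/a^2 = (2*c^2 + |c| + 1)/a^2 := by
    field_simp
    try ring
  rw [hfin, ha4]
  field_simp
  try ring

end MagAux

/-- For `B ≠ 0`, `d > 0` and `z ∉ Σ_B`, the terms
`t_n = ln((πn)²/(2|B|d²)) − ψ((|B| − z + (πn/d)²)/(2|B|))` satisfy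
`t_n = z·(d/(πn))² + O(n^{−4})`; in particular for every `b ∈ (0,d)` the series
defining `ξ_B(b,z)` converges (absolutely). -/
theorem magTerm_asymptotics_and_summable (B d z : ℝ) (hB : B ≠ 0) (hd : 0 < d)
    (hz : z ∉ landauLevels B d) :
    (fun n : ℕ => magTerm B d z n - z * (d / (π * ((n : ℝ) + 1))) ^ 2)
        =O[atTop] (fun n : ℕ => ((n : ℝ) + 1) ^ (-4 : ℤ)) ∧
    ∀ b : ℝ, 0 < b → b < d →
      Summable (fun n : ℕ => magTerm B d z n * Real.sin (π * ((n : ℝ) + 1) * b / d) ^ 2) := by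
  refine ⟨magTerm_asymp B d z hB hd, ?_⟩
  have hO := magTerm_asymp B d z hB hd
  intro b _ _
  have hg : Summable (fun n : ℕ => ((n:ℝ) + 1) ^ (-2 : ℤ)) := by
    have h1 : Summable (fun n : ℕ => 1 / ((n:ℝ) + 1) ^ 2) := by
      have h2 := (summable_nat_add_iff (f := fun n : ℕ => 1 / (n:ℝ) ^ 2) 1).mpr
        (summable_one_div_nat_pow.mpr one_lt_two)
      refine h2.congr fun n => ?_
      push_cast
      ring
    refine h1.congr fun n => ?_
    rw [zpow_neg, ← zpow_natCast (a := ((n:ℝ)+1)) (n := 2)]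
    norm_num
  have h42 : (fun n : ℕ => ((n : ℝ) + 1) ^ (-4 : ℤ)) =O[atTop]
      (fun n : ℕ => ((n : ℝ) + 1) ^ (-2 : ℤ)) := by
    refine isBigO_of_le atTop fun n => ?_
    have hN : (1:ℝ) ≤ (n:ℝ) + 1 := by linarith [Nat.cast_nonneg (α := ℝ) n]
    rw [Real.norm_eq_abs, Real.norm_eq_abs, abs_of_pos (by positivity), abs_of_pos (by positivity)]
    exact zpow_le_zpow_right₀ hN (by norm_num)
  have hz2 : (fun n : ℕ => z * (d / (π * ((n : ℝ) + 1))) ^ 2) =O[atTop]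
      (fun n : ℕ => ((n : ℝ) + 1) ^ (-2 : ℤ)) := by
    rw [isBigO_iff]
    refine ⟨|z| * d^2 / π^2, Eventually.of_forall fun n => ?_⟩
    have hN : (0:ℝ) < (n:ℝ) + 1 := by positivity
    rw [Real.norm_eq_abs, Real.norm_eq_abs, abs_of_pos (show (0:ℝ) < ((n:ℝ)+1)^(-2:ℤ) by positivity)]
    rw [abs_mul, abs_of_nonneg (sq_nonneg (d / (π * ((n:ℝ) + 1))))]
    apply le_of_eq
    have he2 : ((n:ℝ)+1)^(-2:ℤ) = (((n:ℝ)+1)^2)⁻¹ := by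
      rw [zpow_neg]
      norm_cast
    rw [he2]
    field_simp
    try ring
    try exact Or.inl trivial
  have hmagO : (fun n : ℕ => magTerm B d z n) =O[atTop] (fun n : ℕ => ((n:ℝ) + 1) ^ (-2 : ℤ)) := by
    have := (hO.trans h42).add hz2
    refine this.congr_left fun n => ?_
    ring
  have hprodO : (fun n : ℕ => magTerm B d z n * Real.sin (π * ((n : ℝ) + 1) * b / d) ^ 2)
      =O[atTop] (fun n : ℕ => ((n:ℝ) + 1) ^ (-2 : ℤ)) := by
    refine IsBigO.trans ?_ hmagO
    refine isBigO_of_le atTop fun n => ?_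
    rw [Real.norm_eq_abs, Real.norm_eq_abs, abs_mul, abs_of_nonneg (sq_nonneg
      (Real.sin (π * ((n : ℝ) + 1) * b / d)))]
    have h1 : Real.sin (π * ((n : ℝ) + 1) * b / d) ^ 2 ≤ 1 := sin_sq_le_one _
    have h2 : (0:ℝ) ≤ Real.sin (π * ((n : ℝ) + 1) * b / d) ^ 2 := sq_nonneg _
    nlinarith [abs_nonneg (magTerm B d z n)]
  exact summable_of_isBigO_nat hg hprodO
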